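/- arXiv:1405.5631 — 3 statements merged into one kernel-verified Lean document; each statement's English description precedes it below -/
import Mathlib

section
/- Let m, n be positive integers, let α_0, …, α_{m−1} and β_0, …, β_{n−1} be nonnegative real numbers, and define the real polynomial c(q) := (α_{m−1}q^{m−1} + ⋯ + α_1 q + α_0)·q^n − (β_{n−1}q^{n−1} + ⋯ + β_1 q + β_0). If q_0 > 0 and c(q_0) ≥ 0, then c(q) ≥ 0 for all real q ≥ q_0. -/
/-! Write `c(q) = A(q) q^n - B(q)`. On `q > 0` the sign of `c` is that of `A(q) - B(q)/q^n`:
`A` is nondecreasing, while `B(q)/q^n = ∑ β_j q^{j-n}` is nonincreasing because every exponent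
`j - n` is negative. -/

open Finset

lemma pow_mul_pow_le_pow_mul_pow {x y : ℝ} (hx : 0 ≤ x) (hxy : x ≤ y) {j n : ℕ} (hjn : j ≤ n) :
    x ^ n * y ^ j ≤ y ^ n * x ^ j := by
  obtain ⟨k, rfl⟩ := Nat.exists_eq_add_of_le hjn
  have hy : 0 ≤ y := hx.trans hxy
  calc x ^ (j + k) * y ^ j = x ^ j * y ^ j * x ^ k := by ring
    _ ≤ x ^ j * y ^ j * y ^ k := by gcongr
    _ = y ^ (j + k) * x ^ j := by ring

lemma sum_mul_pow_le_sum_mul_pow {s : Finset ℕ} {α : ℕ → ℝ} (hα : ∀ i ∈ s, 0 ≤ α i)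
    {x y : ℝ} (hx : 0 ≤ x) (hxy : x ≤ y) :
    ∑ i ∈ s, α i * x ^ i ≤ ∑ i ∈ s, α i * y ^ i :=
  sum_le_sum fun i hi => mul_le_mul_of_nonneg_left (pow_le_pow_left₀ hx hxy i) (hα i hi)

lemma pow_mul_sum_mul_pow_le {s : Finset ℕ} {n : ℕ} (hs : ∀ j ∈ s, j ≤ n) {β : ℕ → ℝ}
    (hβ : ∀ j ∈ s, 0 ≤ β j) {x y : ℝ} (hx : 0 ≤ x) (hxy : x ≤ y) :
    x ^ n * ∑ j ∈ s, β j * y ^ j ≤ y ^ n * ∑ j ∈ s, β j * x ^ j := by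
  simp only [mul_sum]
  refine sum_le_sum fun j hj => ?_
  calc x ^ n * (β j * y ^ j) = β j * (x ^ n * y ^ j) := by ring
    _ ≤ β j * (y ^ n * x ^ j) :=
      mul_le_mul_of_nonneg_left (pow_mul_pow_le_pow_mul_pow hx hxy (hs j hj)) (hβ j hj)
    _ = y ^ n * (β j * x ^ j) := by ring

theorem poly_nonneg_of_nonneg_at_general (m n : ℕ)
    (α β : ℕ → ℝ) (hα : ∀ i, 0 ≤ α i) (hβ : ∀ j, 0 ≤ β j)
    (q₀ : ℝ) (hq₀ : 0 < q₀)
    (h : 0 ≤ (∑ i ∈ Finset.range m, α i * q₀ ^ i) * q₀ ^ n -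
        ∑ j ∈ Finset.range n, β j * q₀ ^ j) :
    ∀ q : ℝ, q₀ ≤ q →
      0 ≤ (∑ i ∈ Finset.range m, α i * q ^ i) * q ^ n -
        ∑ j ∈ Finset.range n, β j * q ^ j := by
  intro q hq
  set A := fun x : ℝ => ∑ i ∈ range m, α i * x ^ i
  set B := fun x : ℝ => ∑ j ∈ range n, β j * x ^ j
  have hA : A q₀ ≤ A q := sum_mul_pow_le_sum_mul_pow (fun i _ => hα i) hq₀.le hq
  have hqn : 0 ≤ q ^ n := pow_nonneg (hq₀.le.trans hq) n
  suffices q₀ ^ n * B q ≤ q₀ ^ n * (A q * q ^ n) by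
    have := le_of_mul_le_mul_left this (pow_pos hq₀ n)
    simp only [A, B] at this
    linarith
  calc q₀ ^ n * B q ≤ q ^ n * B q₀ :=
        pow_mul_sum_mul_pow_le (fun j hj => (mem_range.mp hj).le) (fun j _ => hβ j) hq₀.le hq
    _ ≤ q ^ n * (A q₀ * q₀ ^ n) := mul_le_mul_of_nonneg_left (by linarith) hqn
    _ ≤ q ^ n * (A q * q₀ ^ n) := by gcongr
    _ = q₀ ^ n * (A q * q ^ n) := by ring

/-- If `c(q) = (α_{m-1} q^{m-1} + ⋯ + α_0)·q^n - (β_{n-1} q^{n-1} + ⋯ + β_0)` with all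
`α_i, β_j ≥ 0`, and `c(q₀) ≥ 0` for some `q₀ > 0`, then `c(q) ≥ 0` for all `q ≥ q₀`. -/
theorem poly_nonneg_of_nonneg_at (m n : ℕ) (hm : 1 ≤ m) (hn : 1 ≤ n)
    (α β : ℕ → ℝ) (hα : ∀ i, 0 ≤ α i) (hβ : ∀ j, 0 ≤ β j)
    (q₀ : ℝ) (hq₀ : 0 < q₀)
    (h : 0 ≤ (∑ i ∈ Finset.range m, α i * q₀ ^ i) * q₀ ^ n -
        ∑ j ∈ Finset.range n, β j * q₀ ^ j) :
    ∀ q : ℝ, q₀ ≤ q →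
      0 ≤ (∑ i ∈ Finset.range m, α i * q ^ i) * q ^ n -
        ∑ j ∈ Finset.range n, β j * q ^ j :=
  poly_nonneg_of_nonneg_at_general m n α β hα hβ q₀ hq₀ h
end

section
/- For every integer n ≥ 1 and every integer q ≥ 2: (1 − q^{−1})^2 ≤ 1 − q^{−1} − q^{−2} < ω(∞,q) < ω(n,q) ≤ 1 − q^{−1}, where the first inequality is strict for q ≥ 3. -/
/-- `ω(n,q) = ∏_{i=1}^n (1 - q⁻ⁱ)`. -/
noncomputable def omegaF (n q : ℕ) : ℝ :=
  ∏ i ∈ Finset.Icc 1 n, (1 - ((q : ℝ))⁻¹ ^ i)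

/-- `ω(∞,q) = ∏_{i=1}^∞ (1 - q⁻ⁱ)`. -/
noncomputable def omegaInf (q : ℕ) : ℝ :=
  ∏' i : ℕ, (1 - ((q : ℝ))⁻¹ ^ (i + 1))

/-- `c₀(∞,q) = q² (1 - ∏_{i=2}^∞ (1 - q⁻ⁱ))`. -/
noncomputable def c0Inf (q : ℕ) : ℝ :=
  (q : ℝ) ^ 2 * (1 - ∏' i : ℕ, (1 - ((q : ℝ))⁻¹ ^ (i + 2)))

/-- `c*(q) = c₀(∞,q) + q·(ω(4,q)·c₀(∞,q²)/ω(∞,q²))·(q·log(1-q⁻²) - log(1-q⁻¹))`. -/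
noncomputable def cStar (q : ℕ) : ℝ :=
  c0Inf q + (q : ℝ) * (omegaF 4 q * c0Inf (q ^ 2) / omegaInf (q ^ 2)) *
    ((q : ℝ) * Real.log (1 - ((q : ℝ))⁻¹ ^ 2) - Real.log (1 - ((q : ℝ))⁻¹))

/-!
Write `x = q⁻¹ ∈ (0, 1/2]`. The partial products `∏_{i ≤ n} (1 - xⁱ)` decrease strictly to `ω(∞,q)`,
which gives `ω(∞,q) < ω(n,q) ≤ ω(1,q) = 1 - x`. For the lower bound, split off the factors
`1 - x` and `1 - x²` and apply the Weierstrass inequality `∏ (1 - aᵢ) ≥ 1 - ∑ aᵢ` to the rest: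
`ω(∞,q) ≥ (1 - x)(1 - x²)(1 - x³/(1 - x)) = 1 - x - x² + x⁵`.
The comparison with `(1 - x)²` amounts to `2x² ≤ x`, i.e. `x ≤ 1/2`.
-/

open Finset Filter Topology

theorem Finset.one_sub_sum_le_prod_one_sub {ι R : Type*} [CommRing R] [PartialOrder R]
    [IsOrderedRing R] (s : Finset ι) {f : ι → R} (h0 : ∀ i ∈ s, 0 ≤ f i)
    (h1 : ∀ i ∈ s, f i ≤ 1) : 1 - ∑ i ∈ s, f i ≤ ∏ i ∈ s, (1 - f i) := by
  induction s using Finset.cons_induction with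
  | empty => simp
  | cons a s _ ih =>
    rw [prod_cons, sum_cons]
    have hfa : 0 ≤ 1 - f a := sub_nonneg.2 (h1 a (mem_cons_self a s))
    have hS : 0 ≤ f a * ∑ i ∈ s, f i :=
      mul_nonneg (h0 a (mem_cons_self a s)) (sum_nonneg fun i hi => h0 i (mem_cons_of_mem hi))
    calc 1 - (f a + ∑ i ∈ s, f i) ≤ (1 - f a) * (1 - ∑ i ∈ s, f i) := by linear_combination hS
      _ ≤ (1 - f a) * ∏ i ∈ s, (1 - f i) := by
        gcongr
        exact ih (fun i hi => h0 i (mem_cons_of_mem hi)) (fun i hi => h1 i (mem_cons_of_mem hi))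

noncomputable def eulerPartialProd (x : ℝ) (n : ℕ) : ℝ :=
  ∏ i ∈ range n, (1 - x ^ (i + 1))

section eulerPartialProd

variable {x : ℝ}

theorem eulerPartialProd_succ (n : ℕ) :
    eulerPartialProd x (n + 1) = eulerPartialProd x n * (1 - x ^ (n + 1)) :=
  prod_range_succ _ n

theorem eulerPartialProd_pos (hx0 : 0 ≤ x) (hx1 : x < 1) (n : ℕ) : 0 < eulerPartialProd x n :=
  prod_pos fun i _ => sub_pos.2 (pow_lt_one₀ hx0 hx1 (Nat.succ_ne_zero i))

theorem eulerPartialProd_strictAnti (hx0 : 0 < x) (hx1 : x < 1) :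
    StrictAnti (eulerPartialProd x) :=
  strictAnti_nat_of_succ_lt fun n => by
    rw [eulerPartialProd_succ]
    exact mul_lt_of_lt_one_right (eulerPartialProd_pos hx0.le hx1 n) (sub_lt_self 1 (pow_pos hx0 _))

theorem tendsto_eulerPartialProd (hx0 : 0 ≤ x) (hx1 : x < 1) :
    Tendsto (eulerPartialProd x) atTop (𝓝 (∏' i, (1 - x ^ (i + 1)))) := by
  have hsum : Summable fun i : ℕ => -x ^ (i + 1) :=
    ((summable_geometric_of_lt_one hx0 hx1).mul_left x).neg.congr fun i => by ring
  have hmul : Multipliable fun i : ℕ => 1 - x ^ (i + 1) := by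
    simpa only [sub_eq_add_neg] using Real.multipliable_one_add_of_summable hsum
  exact hmul.tendsto_prod_tprod_nat

theorem tprod_one_sub_pow_lt_eulerPartialProd (hx0 : 0 < x) (hx1 : x < 1) (n : ℕ) :
    ∏' i, (1 - x ^ (i + 1)) < eulerPartialProd x n :=
  ((eulerPartialProd_strictAnti hx0 hx1).antitone.le_of_tendsto
    (tendsto_eulerPartialProd hx0.le hx1) (n + 1)).trans_lt
    (eulerPartialProd_strictAnti hx0 hx1 n.lt_succ_self)

theorem one_sub_sub_sq_add_pow_five_le_eulerPartialProd (hx0 : 0 ≤ x) (hx1 : x < 1) (n : ℕ) :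
    1 - x - x ^ 2 + x ^ 5 ≤ eulerPartialProd x (n + 2) := by
  set P := ∏ i ∈ range n, (1 - x ^ (i + 3))
  set S := ∑ i ∈ range n, x ^ (i + 3)
  have hsplit : eulerPartialProd x (n + 2) = P * (1 - x) * (1 - x ^ 2) := by
    simp only [eulerPartialProd, prod_range_succ', P]
    ring_nf
  have hP : 1 - S ≤ P := one_sub_sum_le_prod_one_sub _ (fun i _ => pow_nonneg hx0 _)
    (fun i _ => pow_le_one₀ hx0 hx1.le)
  have hS : (1 - x) * S ≤ x ^ 3 := by
    have hgeom : (1 - x) * S = x ^ 3 * (1 - x ^ n) := by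
      simp only [S, pow_add, ← sum_mul, ← mul_neg_geom_sum]
      ring
    rw [hgeom]
    exact mul_le_of_le_one_right (pow_nonneg hx0 3) (sub_le_self 1 (pow_nonneg hx0 n))
  have hx : 0 ≤ 1 - x := sub_nonneg.2 hx1.le
  have hx2 : 0 ≤ 1 - x ^ 2 := sub_nonneg.2 (pow_le_one₀ hx0 hx1.le)
  calc 1 - x - x ^ 2 + x ^ 5 = (1 - x - x ^ 3) * (1 - x ^ 2) := by ring
    _ ≤ (1 - S) * (1 - x) * (1 - x ^ 2) := by gcongr; linarith
    _ ≤ P * (1 - x) * (1 - x ^ 2) := by gcongr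
    _ = eulerPartialProd x (n + 2) := hsplit.symm

theorem one_sub_sub_sq_add_pow_five_le_tprod (hx0 : 0 ≤ x) (hx1 : x < 1) :
    1 - x - x ^ 2 + x ^ 5 ≤ ∏' i, (1 - x ^ (i + 1)) :=
  ge_of_tendsto ((tendsto_eulerPartialProd hx0 hx1).comp (tendsto_add_atTop_nat 2))
    (Eventually.of_forall (one_sub_sub_sq_add_pow_five_le_eulerPartialProd hx0 hx1))

end eulerPartialProd

theorem omegaF_eq_eulerPartialProd (n q : ℕ) : omegaF n q = eulerPartialProd (q : ℝ)⁻¹ n := by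
  rw [omegaF, eulerPartialProd, range_eq_Ico, prod_Ico_add' (fun i => 1 - (q : ℝ)⁻¹ ^ i), zero_add,
    Ico_add_one_right_eq_Icc]

theorem omega_bounds (n q : ℕ) (hn : 1 ≤ n) (hq : 2 ≤ q) :
    ((1 - (q : ℝ)⁻¹) ^ 2 ≤ 1 - (q : ℝ)⁻¹ - (q : ℝ)⁻¹ ^ 2 ∧
      (3 ≤ q → (1 - (q : ℝ)⁻¹) ^ 2 < 1 - (q : ℝ)⁻¹ - (q : ℝ)⁻¹ ^ 2)) ∧
    1 - (q : ℝ)⁻¹ - (q : ℝ)⁻¹ ^ 2 < omegaInf q ∧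
    omegaInf q < omegaF n q ∧
    omegaF n q ≤ 1 - (q : ℝ)⁻¹ := by
  rw [omegaF_eq_eulerPartialProd, omegaInf]
  set x : ℝ := (q : ℝ)⁻¹
  have hx0 : 0 < x := by positivity
  have hx_half : x ≤ 1 / 2 := by
    rw [one_div]
    exact inv_anti₀ two_pos (by exact_mod_cast hq)
  have hx1 : x < 1 := hx_half.trans_lt (by norm_num)
  refine ⟨⟨by nlinarith, fun hq3 => ?_⟩, ?_, tprod_one_sub_pow_lt_eulerPartialProd hx0 hx1 n, ?_⟩
  · have hx_third : x ≤ 1 / 3 := by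
      rw [one_div]
      exact inv_anti₀ three_pos (by exact_mod_cast hq3)
    nlinarith
  · linarith [one_sub_sub_sq_add_pow_five_le_tprod hx0.le hx1, pow_pos hx0 5]
  · calc eulerPartialProd x n ≤ eulerPartialProd x 1 :=
        (eulerPartialProd_strictAnti hx0 hx1).antitone hn
      _ = 1 - x := by simp [eulerPartialProd]
end

section
/- Let q be a prime power, X ∈ M(n,q), and let g be a monic polynomial of degree ≥ 1 dividing the characteristic polynomial of X such that for every monic irreducible polynomial h dividing g, the F_q[X]-module ker(h(X)^n) is cyclic. Then the number of vectors v ∈ F_q^n that are g-witnesses for X equals q^n · ∏_{h} (1 − q^{−deg h}), where the product is over all monic irreducible polynomials h dividing g; equivalently, a uniformly distributed random vector v ∈ F_q^n is a g-witness for X with probability ∏_{h | g} (1 − q^{−deg h}). -/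
/-!
Let `w₀` generate a nonzero cyclic component `W = V(h)`, `h` irreducible. Every `w ∈ W` is
`p(X) w₀`, and `w` generates `W` iff `h ∤ p` (then `p` is invertible modulo the power of `h`
killing `W`), iff `w ∉ h • W`; the same computation identifies `W ⧸ h • W` with `K[X] ⧸ (h)`,
which has `q ^ deg h` elements.

By the Chinese remainder theorem there are polynomials `e_h` acting as the projections of `V`
onto the components `V(h)`, and `v` generates `V(h)` iff `e_h v` does. So `v` is a witness iff
every coordinate of the surjective linear map `V → ∏_h V(h) ⧸ h • V(h)`, `v ↦ (e_h v)_h`, is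
nonzero. All fibres of a surjective linear map have the same size, which gives the count.
-/

open Polynomial Module

theorem Matrix.det_aeval_eq_zero_of_dvd_charpoly {K ι : Type*} [Field K] [Fintype ι]
    [DecidableEq ι] (M : Matrix ι ι K) {h : K[X]} (hh : 0 < h.natDegree)
    (hd : h ∣ M.charpoly) : (aeval M h).det = 0 := by
  -- a root `α` of `h` is an eigenvalue of `M` over `L`, so `h(α) = 0` is in the spectrum of `h(M)`
  let L := AlgebraicClosure K
  obtain ⟨α, hα⟩ := IsAlgClosed.exists_aeval_eq_zero L h (natDegree_pos_iff_degree_pos.1 hh).ne'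
  let ML := M.map (algebraMap K L)
  have hspec : α ∈ spectrum L ML := by
    rw [Matrix.mem_spectrum_iff_isRoot_charpoly, Matrix.charpoly_map, IsRoot, eval_map_algebraMap]
    obtain ⟨s, hs⟩ := hd
    rw [hs, map_mul, hα, zero_mul]
  have h0 : (0 : L) ∈ spectrum L (aeval ML (h.map (algebraMap K L))) :=
    spectrum.subset_polynomial_aeval ML _ ⟨α, hspec, by simpa [eval_map_algebraMap]⟩
  have hmap : aeval ML (h.map (algebraMap K L)) = (aeval M h).map (algebraMap K L) := by
    rw [aeval_map_algebraMap]
    exact aeval_algHom_apply (AlgHom.mapMatrix (Algebra.ofId K L)) M h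
  rw [spectrum.zero_mem_iff, Matrix.isUnit_iff_isUnit_det, isUnit_iff_ne_zero, not_not, hmap] at h0
  exact (FaithfulSMul.algebraMap_eq_zero_iff K L).1 ((RingHom.map_det _ _).trans h0)

theorem AddMonoidHom.card_subtype_comp_mul_card {G H : Type*} [AddGroup G] [AddGroup H]
    [Finite G] (f : G →+ H) (hf : Function.Surjective f) (P : H → Prop) :
    Nat.card {x // P (f x)} * Nat.card H = Nat.card {y // P y} * Nat.card G := by
  let e := QuotientAddGroup.quotientKerEquivOfSurjective f hf
  have hfib : Nat.card {x // P (f x)} = Nat.card f.ker * Nat.card {y // P y} := by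
    rw [← Nat.card_prod]
    exact Nat.card_congr
      ((QuotientAddGroup.preimageMkEquivAddSubgroupProdSet f.ker {z | P (e z)}).trans
        (Equiv.prodCongr (Equiv.refl _) (e.toEquiv.subtypeEquiv fun _ => Iff.rfl)))
  rw [hfib, AddSubgroup.card_eq_card_quotient_mul_card_addSubgroup f.ker, Nat.card_congr e.toEquiv]
  ring

theorem Nat.card_pi_forall_ne_zero {ι : Type*} [Fintype ι] {Q : ι → Type*} [∀ i, Zero (Q i)]
    [∀ i, Finite (Q i)] :
    Nat.card {w : ∀ i, Q i // ∀ i, w i ≠ 0} = ∏ i, (Nat.card (Q i) - 1) := by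
  classical
  rw [Nat.card_congr (Equiv.subtypePiEquivPi (p := fun _ b => b ≠ 0)), Nat.card_pi]
  congr! 1 with i
  have := Fintype.ofFinite (Q i)
  rw [Nat.card_eq_fintype_card, Nat.card_eq_fintype_card, Fintype.card_subtype_compl,
    Fintype.card_subtype_eq]

namespace Module.End

variable {K V : Type*} [Field K] [AddCommGroup V] [Module K V]

section Cyclic

variable (T : Module.End K V)

def cyclicSubmodule (v : V) : Submodule K V :=
  Submodule.span K (Set.range fun k : ℕ => (T ^ k) v)

variable {T}

theorem mem_cyclicSubmodule_iff {v x : V} :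
    x ∈ cyclicSubmodule T v ↔ ∃ p : K[X], aeval T p v = x := by
  constructor
  · intro hx
    induction hx using Submodule.span_induction with
    | mem x hx => obtain ⟨k, rfl⟩ := hx; exact ⟨X ^ k, by simp⟩
    | zero => exact ⟨0, by simp⟩
    | add x y _ _ hx hy =>
      obtain ⟨p, rfl⟩ := hx
      obtain ⟨r, rfl⟩ := hy
      exact ⟨p + r, by simp⟩
    | smul a x _ hx => obtain ⟨p, rfl⟩ := hx; exact ⟨a • p, by simp⟩
  · rintro ⟨p, rfl⟩
    rw [aeval_eq_sum_range, LinearMap.sum_apply]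
    exact Submodule.sum_mem _ fun i _ => Submodule.smul_mem _ _ (Submodule.subset_span ⟨i, rfl⟩)

theorem aeval_apply_mem_cyclicSubmodule (p : K[X]) (v : V) :
    aeval T p v ∈ cyclicSubmodule T v :=
  mem_cyclicSubmodule_iff.2 ⟨p, rfl⟩

theorem self_mem_cyclicSubmodule (v : V) : v ∈ cyclicSubmodule T v := by
  simpa using aeval_apply_mem_cyclicSubmodule (T := T) 1 v

theorem cyclicSubmodule_le_iff {v : V} {P : Submodule K V} :
    cyclicSubmodule T v ≤ P ↔ ∀ p : K[X], aeval T p v ∈ P := by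
  simp only [SetLike.le_def, mem_cyclicSubmodule_iff, forall_exists_index, forall_apply_eq_imp_iff]

theorem aeval_apply_mem_of_mem_cyclicSubmodule (p : K[X]) {v x : V}
    (hx : x ∈ cyclicSubmodule T v) : aeval T p x ∈ cyclicSubmodule T v := by
  obtain ⟨r, rfl⟩ := mem_cyclicSubmodule_iff.1 hx
  rw [← Module.End.mul_apply, ← map_mul]
  exact aeval_apply_mem_cyclicSubmodule _ v

theorem cyclicSubmodule_le_of_mem {v x : V} (hx : x ∈ cyclicSubmodule T v) :
    cyclicSubmodule T x ≤ cyclicSubmodule T v :=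
  cyclicSubmodule_le_iff.2 fun p => aeval_apply_mem_of_mem_cyclicSubmodule p hx

theorem le_cyclicSubmodule_aeval_iff {W : Submodule K V} {e : K[X]}
    (he : ∀ x ∈ W, aeval T e x = x) {v : V} :
    W ≤ cyclicSubmodule T (aeval T e v) ↔ W ≤ cyclicSubmodule T v := by
  refine ⟨fun hle => hle.trans (cyclicSubmodule_le_of_mem (aeval_apply_mem_cyclicSubmodule e v)),
    fun hle x hx => ?_⟩
  obtain ⟨p, hp⟩ := mem_cyclicSubmodule_iff.1 (hle hx)
  rw [← he x hx, ← hp, ← Module.End.mul_apply, ← map_mul, mul_comm, map_mul, Module.End.mul_apply]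
  exact aeval_apply_mem_cyclicSubmodule p _

end Cyclic

section Local

variable {T : Module.End K V} {h : K[X]} {m : ℕ} {W : Submodule K V} {w₀ : V}

theorem eq_bot_of_le_map_aeval (hkill : W ≤ LinearMap.ker (aeval T h ^ m))
    (hle : W ≤ W.map (aeval T h)) : W = ⊥ := by
  have hpow : ∀ j : ℕ, W ≤ W.map (aeval T h ^ j) := by
    intro j
    induction j with
    | zero => simp [Module.End.one_eq_id]
    | succ j ih =>
      rw [pow_succ', Module.End.mul_eq_comp, Submodule.map_comp]
      exact hle.trans (Submodule.map_mono ih)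
  exact le_bot_iff.1 ((hpow m).trans_eq (LinearMap.le_ker_iff_map.1 hkill))

theorem mem_cyclicSubmodule_aeval_apply_of_not_dvd (hh : Irreducible h)
    (hw₀ : (aeval T h ^ m) w₀ = 0) {p : K[X]} (hp : ¬ h ∣ p) :
    w₀ ∈ cyclicSubmodule T (aeval T p w₀) := by
  obtain ⟨a, b, hab⟩ := (hh.coprime_iff_not_dvd.2 hp).pow_left (m := m)
  have hb : aeval T b (aeval T p w₀) = w₀ := by
    calc aeval T b (aeval T p w₀) = aeval T (a * h ^ m + b * p) w₀ := by simp [map_pow, hw₀]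
      _ = w₀ := by rw [hab, map_one, Module.End.one_apply]
  have := aeval_apply_mem_cyclicSubmodule (T := T) b (aeval T p w₀)
  rwa [hb] at this

theorem cyclicSubmodule_le_map_aeval (hW : cyclicSubmodule T w₀ = W) {x : V}
    (hx : x ∈ W.map (aeval T h)) : cyclicSubmodule T x ≤ W.map (aeval T h) := by
  obtain ⟨y, hy, rfl⟩ := hx
  refine cyclicSubmodule_le_iff.2 fun p => ⟨aeval T p y, ?_, ?_⟩
  · exact hW ▸ aeval_apply_mem_of_mem_cyclicSubmodule p (hW ▸ hy)
  · simp only [← Module.End.mul_apply, ← map_mul, mul_comm]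

variable (hh : Irreducible h) (hW : cyclicSubmodule T w₀ = W)
  (hkill : W ≤ LinearMap.ker (aeval T h ^ m)) (hW0 : W ≠ ⊥)
include hh hW hkill hW0

theorem aeval_apply_mem_map_aeval_iff {p : K[X]} :
    aeval T p w₀ ∈ W.map (aeval T h) ↔ h ∣ p := by
  have hw₀ : w₀ ∈ W := hW ▸ self_mem_cyclicSubmodule w₀
  constructor
  · intro hp
    by_contra hndvd
    refine hW0 (eq_bot_of_le_map_aeval hkill ?_)
    calc W = cyclicSubmodule T w₀ := hW.symm
      _ ≤ cyclicSubmodule T (aeval T p w₀) := cyclicSubmodule_le_of_mem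
          (mem_cyclicSubmodule_aeval_apply_of_not_dvd hh (hkill hw₀) hndvd)
      _ ≤ W.map (aeval T h) := cyclicSubmodule_le_map_aeval hW hp
  · rintro ⟨r, rfl⟩
    refine ⟨aeval T r w₀, hW ▸ aeval_apply_mem_cyclicSubmodule r w₀, ?_⟩
    rw [map_mul, Module.End.mul_apply]

theorem le_cyclicSubmodule_iff_notMem_map_aeval {w : V} (hw : w ∈ W) :
    W ≤ cyclicSubmodule T w ↔ w ∉ W.map (aeval T h) := by
  obtain ⟨p, rfl⟩ := mem_cyclicSubmodule_iff.1 (hW ▸ hw)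
  rw [aeval_apply_mem_map_aeval_iff hh hW hkill hW0]
  constructor
  · intro hle hdvd
    have h1 : aeval T 1 w₀ ∈ W.map (aeval T h) :=
      cyclicSubmodule_le_map_aeval hW ((aeval_apply_mem_map_aeval_iff hh hW hkill hW0).2 hdvd)
        (hle (hW ▸ aeval_apply_mem_cyclicSubmodule 1 w₀))
    exact hh.not_isUnit (isUnit_of_dvd_one ((aeval_apply_mem_map_aeval_iff hh hW hkill hW0).1 h1))
  · intro hndvd
    rw [← hW]
    exact cyclicSubmodule_le_of_mem
      (mem_cyclicSubmodule_aeval_apply_of_not_dvd hh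
        (hkill (hW ▸ self_mem_cyclicSubmodule w₀)) hndvd)

theorem finrank_quotient_map_aeval :
    finrank K (W ⧸ (W.map (aeval T h)).comap W.subtype) = h.natDegree := by
  let L : K[X] →ₗ[K] W ⧸ (W.map (aeval T h)).comap W.subtype :=
    Submodule.mkQ _ ∘ₗ LinearMap.codRestrict W ((LinearMap.applyₗ w₀) ∘ₗ (aeval T).toLinearMap)
      (fun p => hW ▸ aeval_apply_mem_cyclicSubmodule p w₀)
  have hL : Function.Surjective L := by
    rintro ⟨⟨x, hx⟩⟩
    obtain ⟨p, rfl⟩ := mem_cyclicSubmodule_iff.1 (hW ▸ hx)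
    exact ⟨p, rfl⟩
  have hker : LinearMap.ker L = (Ideal.span {h}).restrictScalars K := by
    ext p
    simp [L, Ideal.mem_span_singleton, aeval_apply_mem_map_aeval_iff hh hW hkill hW0]
  rw [← finrank_quotient_span_eq_natDegree, ← ((L.quotKerEquivOfSurjective hL).symm.trans
    ((Submodule.quotEquivOfEq _ _ hker).trans
      (Submodule.Quotient.restrictScalarsEquiv K _))).finrank_eq]

end Local

section Primary

variable (T : Module.End K V)

noncomputable def primaryComponent (h : K[X]) : Submodule K V :=
  LinearMap.ker (aeval T h ^ finrank K V)

variable {T}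

theorem mem_primaryComponent_iff {h : K[X]} {v : V} :
    v ∈ primaryComponent T h ↔ aeval T (h ^ finrank K V) v = 0 := by
  rw [primaryComponent, LinearMap.mem_ker, map_pow]

variable [FiniteDimensional K V]

theorem primaryComponent_ne_bot {h : K[X]} (hh : 0 < h.natDegree) (hd : h ∣ T.charpoly) :
    primaryComponent T h ≠ ⊥ := by
  let b := Module.finBasis K V
  have hdet : (aeval T h).det = 0 := by
    rw [← LinearMap.det_toMatrix b]
    change (LinearMap.toMatrixAlgEquiv b (aeval T h)).det = 0
    rw [← aeval_algHom_apply]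
    exact Matrix.det_aeval_eq_zero_of_dvd_charpoly _ hh
      (by rwa [← LinearMap.charpoly_toMatrix T b] at hd)
  refine ne_bot_of_le_ne_bot (LinearMap.det_eq_zero_iff_ker_ne_bot.1 hdet) ?_
  simpa [primaryComponent] using ker_pow_le_ker_pow_finrank (aeval T h) 1

variable (T) in
theorem exists_aeval_projection {S : Finset K[X]} (hS : ∀ h ∈ S, Irreducible h ∧ h.Monic)
    {h : K[X]} (hh : h ∈ S) :
    ∃ e : K[X], (∀ v, aeval T e v ∈ primaryComponent T h) ∧
      (∀ v ∈ primaryComponent T h, aeval T e v = v) ∧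
      ∀ h' ∈ S, h' ≠ h → ∀ v ∈ primaryComponent T h', aeval T e v = 0 := by
  classical
  -- `e = b r` with `a h ^ n + b r = 1`, where `r` is a multiple of every other `h' ^ n` and of
  -- the `h`-free part `c` of the characteristic polynomial
  have hprime : Prime h := (hS h hh).1.prime
  obtain ⟨c, hc, hhc⟩ := (FiniteMultiplicity.of_prime_left hprime
    T.charpoly_monic.ne_zero).exists_eq_pow_mul_and_not_dvd
  set k := multiplicity h T.charpoly
  set r := c * ∏ h' ∈ S.erase h, h' ^ finrank K V
  have hhr : ¬ h ∣ r := by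
    rw [hprime.dvd_mul, hprime.dvd_finsetProd_iff]
    push Not
    refine ⟨hhc, fun h' hh' hdvd => Finset.ne_of_mem_erase hh' ?_⟩
    have hh'S := Finset.mem_of_mem_erase hh'
    exact (eq_of_monic_of_associated (hS h hh).2 (hS h' hh'S).2
      ((hS h hh).1.associated_of_dvd (hS h' hh'S).1 (hprime.dvd_of_dvd_pow hdvd))).symm
  obtain ⟨a, b, hab⟩ := ((hS h hh).1.coprime_iff_not_dvd.2 hhr).pow_left (m := finrank K V)
  refine ⟨b * r, fun v => ?_, fun v hv => ?_, fun h' hh' hne v hv => ?_⟩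
  · apply ker_pow_le_ker_pow_finrank (aeval T h) k
    have : h ^ k * (b * r) = T.charpoly * (b * ∏ h' ∈ S.erase h, h' ^ finrank K V) := by
      rw [hc]; ring
    rw [LinearMap.mem_ker, ← map_pow, ← Module.End.mul_apply, ← map_mul, this, map_mul,
      LinearMap.aeval_self_charpoly, zero_mul, LinearMap.zero_apply]
  · rw [mem_primaryComponent_iff] at hv
    calc aeval T (b * r) v = aeval T (a * h ^ finrank K V + b * r) v := by
          simp only [map_add, map_mul, LinearMap.add_apply, Module.End.mul_apply, hv, map_zero,
            zero_add]
      _ = v := by rw [hab, map_one, Module.End.one_apply]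
  · rw [mem_primaryComponent_iff] at hv
    obtain ⟨t, ht⟩ : h' ^ finrank K V ∣ b * r :=
      ((Finset.dvd_prod_of_mem _ (Finset.mem_erase.2 ⟨hne, hh'⟩)).mul_left c).mul_left b
    rw [ht, mul_comm, map_mul, Module.End.mul_apply, hv, map_zero]

end Primary

theorem surjective_pi_codRestrict_aeval {T : Module.End K V} {ι : Type*} [Fintype ι]
    {W : ι → Submodule K V} {e : ι → K[X]} (hmem : ∀ i v, aeval T (e i) v ∈ W i)
    (hid : ∀ i, ∀ v ∈ W i, aeval T (e i) v = v)
    (hzero : ∀ i j, j ≠ i → ∀ v ∈ W j, aeval T (e i) v = 0) :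
    Function.Surjective (LinearMap.pi fun i => (aeval T (e i)).codRestrict (W i) (hmem i)) := by
  intro y
  refine ⟨∑ j, (y j : V), funext fun i => Subtype.ext ?_⟩
  rw [LinearMap.pi_apply, LinearMap.codRestrict_apply, map_sum,
    Finset.sum_eq_single i (fun j _ hji => hzero i j hji _ (y j).2) (by simp)]
  exact hid i _ (y i).2


section Count

variable [FiniteDimensional K V] {T : Module.End K V}

variable (T) in
/-- The radical `h • V(h)` of the `K[X]`-module `V(h)`. -/
noncomputable def primaryRadical (h : K[X]) : Submodule K (primaryComponent T h) :=
  ((primaryComponent T h).map (aeval T h)).comap (primaryComponent T h).subtype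

theorem card_quotient_primaryRadical [Finite K] {h : K[X]} (hh : Irreducible h)
    (hd : h ∣ T.charpoly) (hcyc : ∃ w, cyclicSubmodule T w = primaryComponent T h) :
    Nat.card (primaryComponent T h ⧸ primaryRadical T h) = Nat.card K ^ h.natDegree := by
  obtain ⟨w, hw⟩ := hcyc
  rw [Module.natCard_eq_pow_finrank (K := K), primaryRadical,
    finrank_quotient_map_aeval hh hw le_rfl (primaryComponent_ne_bot hh.natDegree_pos hd)]

theorem exists_surjective_witness_map {S : Finset K[X]}
    (hS : ∀ h ∈ S, Irreducible h ∧ h.Monic ∧ h ∣ T.charpoly)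
    (hcyc : ∀ h ∈ S, ∃ w, cyclicSubmodule T w = primaryComponent T h) :
    ∃ Ψ : V →ₗ[K] ∀ h : S, primaryComponent T h ⧸ primaryRadical T h, Function.Surjective Ψ ∧
      ∀ v, (∀ h ∈ S, primaryComponent T h ≤ cyclicSubmodule T v) ↔ ∀ h, Ψ v h ≠ 0 := by
  classical
  choose w₀ hw₀ using hcyc
  choose e he using fun h (hh : h ∈ S) =>
    exists_aeval_projection T (fun h hh => ⟨(hS h hh).1, (hS h hh).2.1⟩) hh
  let π : V →ₗ[K] ∀ h : S, primaryComponent T h :=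
    LinearMap.pi fun h => (aeval T (e h h.2)).codRestrict _ (he h h.2).1
  have hπ : Function.Surjective π := surjective_pi_codRestrict_aeval _ (fun h => (he h h.2).2.1)
    fun h h' hne => (he h h.2).2.2 h' h'.2 (Subtype.coe_ne_coe.2 hne)
  let Ψ : V →ₗ[K] ∀ h : S, primaryComponent T h ⧸ primaryRadical T h :=
    LinearMap.pi (fun h => (primaryRadical T h).mkQ ∘ₗ LinearMap.proj h) ∘ₗ π
  refine ⟨Ψ, (Function.Surjective.piMap fun h => Submodule.mkQ_surjective _).comp hπ,
    fun v => ?_⟩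
  rw [Subtype.forall]
  refine forall₂_congr fun h hh => ?_
  rw [← le_cyclicSubmodule_aeval_iff (he h hh).2.1, le_cyclicSubmodule_iff_notMem_map_aeval
    (hS h hh).1 (hw₀ h hh) le_rfl (primaryComponent_ne_bot (hS h hh).1.natDegree_pos (hS h hh).2.2)
    ((he h hh).1 v)]
  rw [ne_eq, show Ψ v ⟨h, hh⟩ = Submodule.Quotient.mk ⟨aeval T (e h hh) v, (he h hh).1 v⟩ from rfl,
    Submodule.Quotient.mk_eq_zero]
  rfl

theorem card_witnesses_mul_prod [Finite K] {S : Finset K[X]}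
    (hS : ∀ h ∈ S, Irreducible h ∧ h.Monic ∧ h ∣ T.charpoly)
    (hcyc : ∀ h ∈ S, ∃ w, cyclicSubmodule T w = primaryComponent T h) :
    Nat.card {v // ∀ h ∈ S, primaryComponent T h ≤ cyclicSubmodule T v} *
        ∏ h ∈ S, Nat.card K ^ h.natDegree =
      Nat.card K ^ finrank K V * ∏ h ∈ S, (Nat.card K ^ h.natDegree - 1) := by
  have : Finite V := Module.finite_of_finite K
  have (h : S) : Finite (primaryComponent T h ⧸ primaryRadical T h) := Module.finite_of_finite K
  obtain ⟨Ψ, hΨ, hwit⟩ := exists_surjective_witness_map hS hcyc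
  have hcount := Ψ.toAddMonoidHom.card_subtype_comp_mul_card hΨ (fun w => ∀ h, w h ≠ 0)
  rw [Nat.card_pi_forall_ne_zero, Nat.card_pi, Module.natCard_eq_pow_finrank (K := K) (V := V)]
    at hcount
  simp only [fun h : S => card_quotient_primaryRadical (hS h h.2).1 (hS h h.2).2.2 (hcyc h h.2)]
    at hcount
  rw [Nat.card_congr (Equiv.subtypeEquivRight hwit), ← Finset.prod_coe_sort S,
    ← Finset.prod_coe_sort S, mul_comm (_ ^ _)]
  exact hcount

theorem card_witnesses_eq [Finite K] {S : Finset K[X]}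
    (hS : ∀ h ∈ S, Irreducible h ∧ h.Monic ∧ h ∣ T.charpoly)
    (hcyc : ∀ h ∈ S, ∃ w, cyclicSubmodule T w = primaryComponent T h) :
    (Nat.card {v // ∀ h ∈ S, primaryComponent T h ≤ cyclicSubmodule T v} : ℝ) =
      (Nat.card K : ℝ) ^ finrank K V * ∏ h ∈ S, (1 - (Nat.card K : ℝ)⁻¹ ^ h.natDegree) := by
  have hq : (0 : ℝ) < Nat.card K := by exact_mod_cast Nat.card_pos
  have hsub (d : ℕ) : ((Nat.card K ^ d - 1 : ℕ) : ℝ) = (Nat.card K : ℝ) ^ d - 1 := by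
    rw [Nat.cast_sub (Nat.one_le_pow _ _ Nat.card_pos), Nat.cast_pow, Nat.cast_one]
  have hcount := congrArg (Nat.cast : ℕ → ℝ) (card_witnesses_mul_prod hS hcyc)
  simp only [Nat.cast_mul, Nat.cast_prod, Nat.cast_pow, hsub] at hcount
  rw [← eq_div_iff (by positivity), mul_div_assoc, ← Finset.prod_div_distrib] at hcount
  rw [hcount]
  congr! 2 with h
  rw [sub_div, div_self (by positivity), one_div, inv_pow]

end Count

end Module.End

theorem Matrix.vecMulLinear_pow {R ι : Type*} [CommSemiring R] [Fintype ι] [DecidableEq ι]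
    (M : Matrix ι ι R) (k : ℕ) : (M ^ k).vecMulLinear = M.vecMulLinear ^ k := by
  induction k with
  | zero => ext; simp
  | succ k ih =>
    refine LinearMap.ext fun v => ?_
    rw [pow_succ', pow_succ, Module.End.mul_apply, ← ih]
    simp [Matrix.vecMul_vecMul]

theorem Matrix.aeval_vecMulLinear {R ι : Type*} [CommSemiring R] [Fintype ι] [DecidableEq ι]
    (M : Matrix ι ι R) (p : R[X]) : aeval M.vecMulLinear p = (aeval M p).vecMulLinear := by
  induction p using Polynomial.induction_on' with
  | add p q hp hq => ext; simp [hp, hq]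
  | monomial k a =>
    refine LinearMap.ext fun v => ?_
    simp [aeval_monomial, ← Matrix.vecMulLinear_pow, Algebra.algebraMap_eq_smul_one]

theorem Matrix.charpoly_vecMulLinear {R ι : Type*} [CommRing R] [Fintype ι] [DecidableEq ι]
    (M : Matrix ι ι R) : M.vecMulLinear.charpoly = M.charpoly := by
  rw [← Matrix.mulVecLin_transpose, ← Matrix.toLin'_apply', Matrix.charpoly_toLin',
    Matrix.charpoly_transpose]

open Module.End UniqueFactorizationMonoid in
theorem card_witnesses_general (n q : ℕ) (F : Type) [Field F] [Fintype F] [DecidableEq F]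
    (hF : Fintype.card F = q)
    (X : Matrix (Fin n) (Fin n) F) (g : Polynomial F) (hdvd : g ∣ X.charpoly)
    (hcyc : ∀ h : Polynomial F, h.Monic → Irreducible h → h ∣ g →
      ∃ w, w ∈ LinearMap.ker (Matrix.vecMulLinear ((Polynomial.aeval X h) ^ n)) ∧
        Submodule.span F (Set.range fun k : ℕ => Matrix.vecMul w (X ^ k)) =
          LinearMap.ker (Matrix.vecMulLinear ((Polynomial.aeval X h) ^ n))) :
    (Nat.card {v : Fin n → F // ∀ h : Polynomial F, h.Monic → Irreducible h → h ∣ g →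
        LinearMap.ker (Matrix.vecMulLinear ((Polynomial.aeval X h) ^ n)) ≤
          Submodule.span F (Set.range fun k : ℕ => Matrix.vecMul v (X ^ k))} : ℝ) =
      (q : ℝ) ^ n *
        ∏ h ∈ (normalizedFactors g).toFinset, (1 - (q : ℝ)⁻¹ ^ h.natDegree) := by
  set T := X.vecMulLinear
  set S := (normalizedFactors g).toFinset
  have hS (h : F[X]) : h ∈ S ↔ Irreducible h ∧ h.Monic ∧ h ∣ g := by
    rw [Multiset.mem_toFinset,
      Polynomial.mem_normalizedFactors_iff (ne_zero_of_dvd_ne_zero X.charpoly_monic.ne_zero hdvd)]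
  have hprimary (h : F[X]) :
      LinearMap.ker (Matrix.vecMulLinear (aeval X h ^ n)) = primaryComponent T h := by
    rw [primaryComponent, Module.finrank_fin_fun, ← map_pow, ← map_pow, Matrix.aeval_vecMulLinear]
  have hcyclic (v : Fin n → F) :
      Submodule.span F (Set.range fun k : ℕ => Matrix.vecMul v (X ^ k)) = cyclicSubmodule T v := by
    simp [cyclicSubmodule, T, ← Matrix.vecMulLinear_pow]
  simp only [hprimary, hcyclic] at hcyc ⊢
  have hwit (v : Fin n → F) : (∀ h : F[X], h.Monic → Irreducible h → h ∣ g →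
      primaryComponent T h ≤ cyclicSubmodule T v) ↔
        ∀ h ∈ S, primaryComponent T h ≤ cyclicSubmodule T v :=
    forall_congr' fun h => by rw [hS]; tauto
  rw [Nat.card_congr (Equiv.subtypeEquivRight hwit), card_witnesses_eq, Nat.card_eq_fintype_card,
    hF, Module.finrank_fin_fun]
  · intro h hh
    obtain ⟨hirr, hmon, hhg⟩ := (hS h).1 hh
    exact ⟨hirr, hmon, Matrix.charpoly_vecMulLinear X ▸ hhg.trans hdvd⟩
  · intro h hh
    obtain ⟨hirr, hmon, hhg⟩ := (hS h).1 hh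
    obtain ⟨w, -, hw⟩ := hcyc h hmon hirr hhg
    exact ⟨w, hw⟩

open UniqueFactorizationMonoid in
/-- If `X ∈ M(n,F)` (with `|F| = q`) is f-cyclic relative to every monic irreducible
divisor `h` of a monic divisor `g` (of degree ≥ 1) of its characteristic polynomial,
then the number of `g`-witnesses `v` for `X` equals
`qⁿ · ∏_{h ∣ g} (1 - q^{-deg h})`, the product running over the distinct monic
irreducible divisors of `g` (its normalized factors). -/
theorem card_witnesses (n q : ℕ) (F : Type) [Field F] [Fintype F] [DecidableEq F]
    (hF : Fintype.card F = q)
    (X : Matrix (Fin n) (Fin n) F) (g : Polynomial F) (hg : g.Monic)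
    (hdeg : 1 ≤ g.natDegree) (hdvd : g ∣ X.charpoly)
    (hcyc : ∀ h : Polynomial F, h.Monic → Irreducible h → h ∣ g →
      ∃ w, w ∈ LinearMap.ker (Matrix.vecMulLinear ((Polynomial.aeval X h) ^ n)) ∧
        Submodule.span F (Set.range fun k : ℕ => Matrix.vecMul w (X ^ k)) =
          LinearMap.ker (Matrix.vecMulLinear ((Polynomial.aeval X h) ^ n))) :
    (Nat.card {v : Fin n → F // ∀ h : Polynomial F, h.Monic → Irreducible h → h ∣ g →
        LinearMap.ker (Matrix.vecMulLinear ((Polynomial.aeval X h) ^ n)) ≤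
          Submodule.span F (Set.range fun k : ℕ => Matrix.vecMul v (X ^ k))} : ℝ) =
      (q : ℝ) ^ n *
        ∏ h ∈ (normalizedFactors g).toFinset, (1 - (q : ℝ)⁻¹ ^ h.natDegree) :=
  card_witnesses_general n q F hF X g hdvd hcyc
end
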